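/- If x ∈ [0,1]^V and \tilde f_G(x) < ∞, then 𝕶_G(x) · \tilde f_G(x) = 1 (where \tilde f_G(x) is regarded as a real number). -/

import Mathlib

open scoped Classical ENNReal

set_option linter.unusedSectionVars false

variable {V : Type*} [Fintype V] [DecidableEq V]

/-- An admissible swap exchanges two consecutive letters that are adjacent in `G`. -/
def AdjSwap (G : SimpleGraph V) (w w' : List V) : Prop :=
  ∃ (a b : List V) (u v : V), G.Adj u v ∧ w = a ++ u :: v :: b ∧ w' = a ++ v :: u :: b

/-- Two words are equivalent if one can be transformed into the other by finitely many
admissible swaps. -/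
def WordEquiv (G : SimpleGraph V) : List V → List V → Prop :=
  Relation.ReflTransGen (AdjSwap G)

lemma adjSwap_symm (G : SimpleGraph V) : Symmetric (AdjSwap G) := by
  rintro w w' ⟨a, b, u, v, h, rfl, rfl⟩
  exact ⟨a, b, v, u, h.symm, rfl, rfl⟩

/-- The setoid of words modulo admissible swaps. -/
def wordSetoid (G : SimpleGraph V) : Setoid (List V) where
  r := WordEquiv G
  iseqv := ⟨fun _ => Relation.ReflTransGen.refl,
    fun h => by
      unfold WordEquiv at h ⊢
      induction h with
      | refl => exact Relation.ReflTransGen.refl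
      | tail _ hs ih => exact Relation.ReflTransGen.head (adjSwap_symm G hs) ih,
    fun h h' => Relation.ReflTransGen.trans h h'⟩

/-- A word is `G`-reduced if between any two equal letters there is a letter distinct from
them and not adjacent to them. -/
def IsGReduced (G : SimpleGraph V) (w : List V) : Prop :=
  ∀ i j : Fin w.length, i < j → w.get i = w.get j →
    ∃ k : Fin w.length, i < k ∧ k < j ∧ w.get k ≠ w.get i ∧ ¬ G.Adj (w.get k) (w.get i)

/-- The product `x_{w_1} ⋯ x_{w_ℓ}` depends only on the equivalence class of a word. -/
noncomputable def classProd (G : SimpleGraph V) (x : V → ℝ≥0∞) :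
    Quotient (wordSetoid G) → ℝ≥0∞ :=
  Quotient.lift (fun w : List V => (w.map x).prod) (by
    intro a b h
    induction h with
    | refl => rfl
    | tail _ hs ih =>
        obtain ⟨a', b', u, v, huv, rfl, rfl⟩ := hs
        rw [ih]
        simp only [List.map_append, List.prod_append, List.map_cons, List.prod_cons]
        ring)

/-- `tildeF G x` : the sum over all equivalence classes of words of `∏ x_{w_i}`,
valued in `[0,∞]`. -/
noncomputable def tildeF (G : SimpleGraph V) (x : V → ℝ) : ℝ≥0∞ :=
  ∑' c : Quotient (wordSetoid G), classProd G (fun v => ENNReal.ofReal (x v)) c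

/-- `redF G x` : the sum over all equivalence classes of `G`-reduced words of `∏ x_{w_i}`,
valued in `[0,∞]`. -/
noncomputable def redF (G : SimpleGraph V) (x : V → ℝ) : ℝ≥0∞ :=
  ∑' c : {c : Quotient (wordSetoid G) // ∃ w, IsGReduced G w ∧ Quotient.mk (wordSetoid G) w = c},
    classProd G (fun v => ENNReal.ofReal (x v)) c.1

/-- The clique polynomial `𝕶_{G,V'}(x) = ∑_{cliques K ⊆ V'} (-1)^{|K|} ∏_{v ∈ K} x_v`. -/
noncomputable def cliquePoly (G : SimpleGraph V) (V' : Finset V) (x : V → ℝ) : ℝ :=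
  ∑ K ∈ V'.powerset.filter (fun K : Finset V => G.IsClique (K : Set V)),
    (-1 : ℝ) ^ K.card * ∏ v ∈ K, x v

/-- The Euclidean norm on `ℝ^V`. -/
noncomputable def eucNorm (x : V → ℝ) : ℝ := Real.sqrt (∑ v, x v ^ 2)

/-- `min_{V' ⊆ V} 𝕶_{G,V'}(x)`. -/
noncomputable def minK (G : SimpleGraph V) (x : V → ℝ) : ℝ :=
  Finset.univ.inf' ⟨∅, Finset.mem_univ _⟩ fun V' : Finset V => cliquePoly G V' x

/-- `ρ(u) = inf {r ∈ [0,∞) : min_{V' ⊆ V} 𝕶_{G,V'}(r·u) = 0}`. -/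
noncomputable def rho (G : SimpleGraph V) (u : V → ℝ) : ℝ :=
  sInf {r : ℝ | 0 ≤ r ∧ minK G (r • u) = 0}

/-- The region `R(G) = {x ∈ [0,1]^V : 𝕶_{G,V'}(x) > 0 for all V' ⊆ V}`. -/
def regionR (G : SimpleGraph V) : Set (V → ℝ) :=
  {x | (∀ v, x v ∈ Set.Icc (0 : ℝ) 1) ∧ ∀ V' : Finset V, 0 < cliquePoly G V' x}


/-! Call an equivalence class of words a trace. Prepending the letters of a clique `K` to a
trace is injective, and its image consists of the traces whose set of possible first letters,
itself a clique, contains `K`. Hence `x^K · f̃_G(x)` is the sum of `x^t` over those traces `t`,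
and in `𝕶_G(x) · f̃_G(x)` a trace `t` is counted with multiplicity `∑_{K ⊆ first(t)} (-1)^|K|`,
which vanishes unless `t` is empty. -/

namespace WordEquiv

variable {G : SimpleGraph V} {w w' w'' : List V}

lemma symm (h : WordEquiv G w w') : WordEquiv G w' w :=
  (wordSetoid G).iseqv.symm h

lemma trans (h : WordEquiv G w w') (h' : WordEquiv G w' w'') : WordEquiv G w w'' :=
  Relation.ReflTransGen.trans h h'

lemma append_left (l : List V) (h : WordEquiv G w w') : WordEquiv G (l ++ w) (l ++ w') := by
  refine Relation.ReflTransGen.lift (l ++ ·) ?_ _ _ h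
  rintro _ _ ⟨a, b, u, v, huv, rfl, rfl⟩
  exact ⟨l ++ a, b, u, v, huv, by simp, by simp⟩

lemma append_right (l : List V) (h : WordEquiv G w w') : WordEquiv G (w ++ l) (w' ++ l) := by
  refine Relation.ReflTransGen.lift (· ++ l) ?_ _ _ h
  rintro _ _ ⟨a, b, u, v, huv, rfl, rfl⟩
  exact ⟨a, b ++ l, u, v, huv, by simp, by simp⟩

lemma perm (h : WordEquiv G w w') : w.Perm w' := by
  induction h with
  | refl => rfl
  | tail _ hs ih =>
    obtain ⟨a, b, u, v, -, rfl, rfl⟩ := hs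
    exact ih.trans ((List.Perm.swap v u b).append_left a)

lemma erase (z : V) (h : WordEquiv G w w') : WordEquiv G (w.erase z) (w'.erase z) := by
  induction h with
  | refl => exact Relation.ReflTransGen.refl
  | tail _ hs ih =>
    refine ih.trans ?_
    obtain ⟨a, b, u, v, huv, rfl, rfl⟩ := hs
    by_cases ha : z ∈ a
    · rw [List.erase_append_left _ ha, List.erase_append_left _ ha]
      exact .single ⟨a.erase z, b, u, v, huv, rfl, rfl⟩
    rw [List.erase_append_right _ ha, List.erase_append_right _ ha]
    by_cases hu : u = z
    · subst hu
      simp only [List.erase_cons, beq_self_eq_true, beq_iff_eq, huv.ne.symm, if_true, if_false]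
      exact .refl
    by_cases hv : v = z
    · subst hv
      simp only [List.erase_cons, beq_self_eq_true, beq_iff_eq, hu, if_true, if_false]
      exact .refl
    simp only [List.erase_cons, beq_iff_eq, hu, hv, if_false]
    exact .single ⟨a, b.erase z, u, v, huv, rfl, rfl⟩

lemma append_left_iff (l : List V) : WordEquiv G (l ++ w) (l ++ w') ↔ WordEquiv G w w' := by
  refine ⟨fun h => ?_, append_left l⟩
  induction l with
  | nil => exact h
  | cons z l ih =>
    apply ih
    simpa using h.erase z

/-- Swaps never exchange two non-adjacent letters, so their relative order is an invariant. -/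
lemma filter_eq_of_not_adj {u v : V} (huv : ¬ G.Adj u v) (h : WordEquiv G w w') :
    w.filter (fun z => z = u ∨ z = v) = w'.filter (fun z => z = u ∨ z = v) := by
  induction h with
  | refl => rfl
  | tail _ hs ih =>
    rw [ih]
    obtain ⟨a, b, p, q, hpq, rfl, rfl⟩ := hs
    simp only [List.filter_append, List.filter_cons]
    congr 1
    by_cases hp : p = u ∨ p = v <;> by_cases hq : q = u ∨ q = v
    · exfalso
      rcases hp with rfl | rfl <;> rcases hq with rfl | rfl
      exacts [hpq.ne rfl, huv hpq, huv hpq.symm, hpq.ne rfl]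
    all_goals simp [hp, hq]

end WordEquiv

lemma wordEquiv_of_perm {G : SimpleGraph V} {w w' : List V} (hp : w.Perm w')
    (hw : w.Pairwise G.Adj) : WordEquiv G w w' := by
  induction hp with
  | nil => exact .refl
  | cons z _ ih => exact (ih (List.pairwise_cons.1 hw).2).append_left [z]
  | swap p q l => exact .single ⟨[], l, q, p, List.rel_of_pairwise_cons hw (by simp), rfl, rfl⟩
  | trans hp₁ _ ih₁ ih₂ => exact (ih₁ hw).trans (ih₂ (hw.perm hp₁ fun h => h.symm))

abbrev Trace (G : SimpleGraph V) := Quotient (wordSetoid G)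

namespace Trace

variable {G : SimpleGraph V}

def prod (G : SimpleGraph V) {M : Type*} [CommMonoid M] (x : V → M) : Trace G → M :=
  Quotient.lift (fun w => (w.map x).prod) fun _ _ h => (h.perm.map x).prod_eq

lemma prod_map {M N F : Type*} [CommMonoid M] [CommMonoid N] [FunLike F M N]
    [MonoidHomClass F M N] (f : F) (x : V → M) (t : Trace G) :
    prod G (f ∘ x) t = f (prod G x t) := by
  induction t using Quotient.ind with | _ w =>
  simp [prod, map_list_prod]

def prepend (l : List V) : Trace G → Trace G :=
  Quotient.map (l ++ ·) fun _ _ => WordEquiv.append_left l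

lemma prepend_injective (l : List V) : Function.Injective (prepend (G := G) l) := by
  intro s t
  induction s using Quotient.ind
  induction t using Quotient.ind
  exact fun h => Quotient.sound ((WordEquiv.append_left_iff l).1 (Quotient.exact h))

lemma prod_prepend {M : Type*} [CommMonoid M] (x : V → M) (l : List V) (t : Trace G) :
    prod G x (prepend l t) = (l.map x).prod * prod G x t := by
  induction t using Quotient.ind with | _ w =>
  exact (congrArg List.prod (List.map_append ..)).trans List.prod_append

noncomputable def initSet (t : Trace G) : Finset V :=
  {v | ∃ w, Quotient.mk _ (v :: w) = t}

lemma mem_initSet {t : Trace G} {v : V} : v ∈ initSet t ↔ ∃ w, Quotient.mk _ (v :: w) = t := by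
  simp [initSet]

lemma isClique_initSet (t : Trace G) : G.IsClique (initSet t : Set V) := by
  intro u hu v hv huv
  by_contra hadj
  obtain ⟨w₁, rfl⟩ := mem_initSet.1 (Finset.mem_coe.1 hu)
  obtain ⟨w₂, h⟩ := mem_initSet.1 (Finset.mem_coe.1 hv)
  have hfilter := WordEquiv.filter_eq_of_not_adj hadj (Quotient.exact h)
  simp only [List.filter_cons, true_or, or_true, decide_true, if_true] at hfilter
  exact huv (List.head_eq_of_cons_eq hfilter).symm

lemma initSet_eq_empty_iff (t : Trace G) : initSet t = ∅ ↔ t = Quotient.mk _ [] := by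
  induction t using Quotient.ind with | _ w =>
  constructor
  · intro h
    cases w with
    | nil => rfl
    | cons v w =>
      have hv := (mem_initSet (t := Quotient.mk (wordSetoid G) (v :: w)) (v := v)).2 ⟨w, rfl⟩
      simp [h] at hv
  · intro h
    refine Finset.eq_empty_iff_forall_notMem.2 fun v hv => ?_
    obtain ⟨w', hw'⟩ := mem_initSet.1 hv
    simpa using (Quotient.exact (hw'.trans h)).perm.length_eq

lemma mem_initSet_prepend {l : List V} (hl : l.Pairwise G.Adj) {v : V} (hv : v ∈ l)
    (t : Trace G) : v ∈ initSet (prepend l t) := by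
  induction t using Quotient.ind with | _ w =>
  refine mem_initSet.2 ⟨l.erase v ++ w, Quotient.sound ?_⟩
  exact ((wordEquiv_of_perm (List.perm_cons_erase hv) hl).append_right w).symm

lemma wordEquiv_cons_erase {v : V} {w : List V} (h : v ∈ initSet (Quotient.mk (wordSetoid G) w)) :
    WordEquiv G w (v :: w.erase v) := by
  obtain ⟨w', hw'⟩ := mem_initSet.1 h
  have h' : WordEquiv G (v :: w') w := Quotient.exact hw'
  have h'' := h'.erase v
  rw [List.erase_cons_head] at h''
  exact h'.symm.trans (h''.append_left [v])

lemma mem_initSet_erase {u v : V} (huv : u ≠ v) {w : List V}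
    (h : u ∈ initSet (Quotient.mk (wordSetoid G) w)) :
    u ∈ initSet (Quotient.mk (wordSetoid G) (w.erase v)) := by
  obtain ⟨w', hw'⟩ := mem_initSet.1 h
  refine mem_initSet.2 ⟨w'.erase v, Quotient.sound (?_ : WordEquiv G _ _)⟩
  simpa [List.erase_cons, huv] using (Quotient.exact hw' : WordEquiv G _ _).erase v

lemma exists_prepend_eq {l : List V} (hl : l.Pairwise G.Adj) {t : Trace G}
    (h : ∀ v ∈ l, v ∈ initSet t) : ∃ s, prepend l s = t := by
  induction l generalizing t with
  | nil => exact ⟨t, by induction t using Quotient.ind; rfl⟩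
  | cons v l ih =>
    induction t using Quotient.ind with | _ w =>
    obtain ⟨hvl, hl⟩ := List.pairwise_cons.1 hl
    obtain ⟨s, hs⟩ := ih hl (t := Quotient.mk _ (w.erase v)) fun u hu =>
      mem_initSet_erase (hvl u hu).ne.symm (h u (List.mem_cons_of_mem _ hu))
    refine ⟨s, ?_⟩
    induction s using Quotient.ind with | _ s =>
    refine Quotient.sound ((WordEquiv.append_left [v] (Quotient.exact hs)).trans ?_)
    exact (wordEquiv_cons_erase (h v List.mem_cons_self)).symm

lemma range_prepend_toList {K : Finset V} (hK : G.IsClique (K : Set V)) :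
    Set.range (prepend (G := G) K.toList) = {t | K ⊆ initSet t} := by
  have hl : K.toList.Pairwise G.Adj :=
    K.nodup_toList.pairwise_of_forall_ne fun a ha b hb hab =>
      hK (by simpa using ha) (by simpa using hb) hab
  ext t
  constructor
  · rintro ⟨s, rfl⟩ v hv
    exact mem_initSet_prepend hl (Finset.mem_toList.2 hv) s
  · exact fun h => exists_prepend_eq hl fun v hv => h (Finset.mem_toList.1 hv)

end Trace

lemma sum_cliques_ite_subset_neg_one_pow {G : SimpleGraph V} {I : Finset V}
    (hI : G.IsClique (I : Set V)) :
    ∑ K ∈ Finset.univ.powerset.filter (fun K : Finset V => G.IsClique (K : Set V)),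
      (if K ⊆ I then (-1 : ℝ) ^ K.card else 0) = if I = ∅ then 1 else 0 := by
  rw [← Finset.sum_filter, Finset.filter_filter]
  have hfilter : Finset.univ.powerset.filter
      (fun K : Finset V => G.IsClique (K : Set V) ∧ K ⊆ I) = I.powerset := by
    ext K
    simpa using fun hKI : K ⊆ I => hI.subset (Finset.coe_subset.2 hKI)
  rw [hfilter]
  exact_mod_cast Finset.sum_powerset_neg_one_pow_card

theorem cliquePoly_mul_tsum_prod (G : SimpleGraph V) (x : V → ℝ)
    (hsum : Summable (Trace.prod G x)) :
    cliquePoly G Finset.univ x * ∑' t, Trace.prod G x t = 1 := by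
  set cliques := Finset.univ.powerset.filter (fun K : Finset V => G.IsClique (K : Set V))
  set f := Trace.prod G x
  have hprepend : ∀ K ∈ cliques, (∏ v ∈ K, x v) * ∑' t, f t
      = ∑' t, {t | K ⊆ Trace.initSet t}.indicator f t := fun K hK => by
    rw [← tsum_mul_left, ← tsum_subtype, ← Trace.range_prepend_toList (Finset.mem_filter.1 hK).2,
      tsum_range f (Trace.prepend_injective _)]
    simp [f, Trace.prod_prepend, Finset.prod_map_toList]
  have hcount : ∀ t, ∑ K ∈ cliques, (-1 : ℝ) ^ K.card * {t | K ⊆ Trace.initSet t}.indicator f t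
      = if t = Quotient.mk _ [] then f t else 0 := fun t => by
    have hsummand : ∀ K, (-1 : ℝ) ^ K.card * {t | K ⊆ Trace.initSet t}.indicator f t
        = (if K ⊆ Trace.initSet t then (-1 : ℝ) ^ K.card else 0) * f t := fun K => by
      by_cases h : K ⊆ Trace.initSet t <;> simp [h]
    rw [Finset.sum_congr rfl fun K _ => hsummand K, ← Finset.sum_mul,
      sum_cliques_ite_subset_neg_one_pow (Trace.isClique_initSet t)]
    simp only [Trace.initSet_eq_empty_iff, ite_mul, one_mul, zero_mul]
  calc cliquePoly G Finset.univ x * ∑' t, f t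
      = ∑ K ∈ cliques, ∑' t, (-1 : ℝ) ^ K.card * {t | K ⊆ Trace.initSet t}.indicator f t := by
        rw [cliquePoly, Finset.sum_mul]
        exact Finset.sum_congr rfl fun K hK => by rw [mul_assoc, hprepend K hK, tsum_mul_left]
    _ = ∑' t, ∑ K ∈ cliques, (-1 : ℝ) ^ K.card * {t | K ⊆ Trace.initSet t}.indicator f t :=
        (Summable.tsum_finsetSum (s := cliques) fun K _ => (hsum.indicator _).mul_left _).symm
    _ = 1 := by
        rw [tsum_congr hcount, tsum_eq_single _ fun t ht => if_neg ht, if_pos rfl]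
        rfl

/-- if `x ∈ [0,1]^V` and `tildeF G x < ∞`, then `𝕶_G(x) · tildeF G x = 1`. -/
theorem cliquePoly_mul_tildeF (G : SimpleGraph V) (x : V → ℝ)
    (hx : ∀ v, x v ∈ Set.Icc (0 : ℝ) 1) (hfin : tildeF G x < ⊤) :
    cliquePoly G Finset.univ x * (tildeF G x).toReal = 1 := by
  set y : V → ℝ≥0∞ := fun v => ENNReal.ofReal (x v)
  have hy : ∀ t, classProd G y t ≠ ⊤ := fun t => by
    change Trace.prod G (ENNReal.ofNNRealHom ∘ fun v => (x v).toNNReal) t ≠ ⊤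
    rw [Trace.prod_map]
    exact ENNReal.coe_ne_top
  have hreal : (fun t => (classProd G y t).toReal) = Trace.prod G x := funext fun t => by
    change ENNReal.toRealHom (Trace.prod G y t) = _
    rw [← Trace.prod_map]
    congr 1
    exact funext fun v => ENNReal.toReal_ofReal (hx v).1
  have hsum : Summable (Trace.prod G x) := hreal ▸ ENNReal.summable_toReal hfin.ne
  rw [tildeF, ENNReal.tsum_toReal_eq hy, hreal]
  exact cliquePoly_mul_tsum_prod G x hsum
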